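/- arXiv:1501.07786 — 5 statements merged into one kernel-verified Lean document; each statement's English description precedes it below -/
import Mathlib

section
/- Let (W, X) be a hedgehog in a graph G. Then for every pair of distinct vertices u, v ∈ W and every integer ℓ with 2 ≤ ℓ ≤ |X| − 1, there is a path in G of length ℓ from u to v all of whose vertices lie in W. -/
/-- `(W, X)` is a hedgehog in `G`: `X ⊆ W`, `X` induces a complete subgraph,
and every vertex of `W \ X` is adjacent to every vertex of `X`. -/
def IsHedgehog {V : Type*} (G : SimpleGraph V) (W X : Finset V) : Prop :=
  X ⊆ W ∧ (∀ x ∈ X, ∀ y ∈ X, x ≠ y → G.Adj x y) ∧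
    (∀ v ∈ W, v ∉ X → ∀ x ∈ X, G.Adj v x)

/-!
Every vertex of `W` is adjacent to every other vertex of the clique `X`. So for `u ≠ v` in `W`,
listing any `ℓ - 1 ≥ 1` vertices of `X \ {u, v}` between `u` and `v` gives a path of length `ℓ`
inside `W`; such vertices exist because `|X \ {u, v}| ≥ |X| - 2 ≥ ℓ - 1`.
-/

namespace SimpleGraph

variable {V : Type*} {G : SimpleGraph V}

lemma exists_walk_support_eq_of_isChain {u v : V} {xs : List V}
    (hchain : (u :: (xs ++ [v])).IsChain G.Adj) :
    ∃ p : G.Walk u v, p.support = u :: (xs ++ [v]) := by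
  have := Walk.support_ofSupport (List.cons_ne_nil _ _) hchain
  exact ⟨_, (Walk.support_copy _ rfl (by simp)).trans this⟩

end SimpleGraph

namespace IsHedgehog

variable {V : Type*} {G : SimpleGraph V} {W X : Finset V}

lemma adj (h : IsHedgehog G W X) {a x : V} (ha : a ∈ W) (hx : x ∈ X) (hax : a ≠ x) :
    G.Adj a x := by
  by_cases haX : a ∈ X
  · exact h.2.1 a haX x hx hax
  · exact h.2.2 a ha haX x hx

lemma isChain_adj (h : IsHedgehog G W X) {b : V} (hb : b ∈ W) :
    ∀ {a : V} {xs : List V}, xs ≠ [] → (∀ x ∈ xs, x ∈ X) → xs.Nodup →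
      a ∈ W → a ∉ xs → b ∉ xs → (a :: (xs ++ [b])).IsChain G.Adj
  | _, [], hne, _, _, _, _, _ => absurd rfl hne
  | a, x :: xs, _, hX, hnd, ha, haxs, hbxs => by
    have hx : x ∈ X := hX x List.mem_cons_self
    have hax : G.Adj a x := h.adj ha hx fun hax => haxs (hax ▸ List.mem_cons_self)
    cases xs with
    | nil =>
      have hxb : G.Adj x b := (h.adj hb hx fun hbx => hbxs (hbx ▸ List.mem_cons_self)).symm
      exact .cons_cons hax (.cons_cons hxb (.singleton b))
    | cons y ys =>
      exact .cons_cons hax (h.isChain_adj hb (List.cons_ne_nil y ys)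
        (fun z hz => hX z (.tail x hz)) hnd.of_cons (h.1 hx) (List.nodup_cons.mp hnd).1
        fun hbxs' => hbxs (.tail x hbxs'))

end IsHedgehog

theorem stmt3 {V : Type*} (G : SimpleGraph V) (W X : Finset V)
    (h : IsHedgehog G W X)
    (u v : V) (hu : u ∈ W) (hv : v ∈ W) (huv : u ≠ v)
    (ℓ : ℕ) (hℓ2 : 2 ≤ ℓ) (hℓX : ℓ ≤ X.card - 1) :
    ∃ p : G.Walk u v, p.IsPath ∧ p.length = ℓ ∧ ∀ x ∈ p.support, x ∈ W := by
  classical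
  have hcard : ℓ - 1 ≤ (X \ {u, v}).card := by
    have := Finset.le_card_sdiff {u, v} X
    have := Finset.card_le_two (a := u) (b := v)
    omega
  obtain ⟨S, hSX, hScard⟩ := Finset.exists_subset_card_eq hcard
  have hS : ∀ x ∈ S.toList, x ∈ X ∧ x ≠ u ∧ x ≠ v := fun x hx => by
    simpa using hSX (Finset.mem_toList.mp hx)
  have hne : S.toList ≠ [] := by
    rw [Ne, Finset.toList_eq_nil, ← Finset.card_eq_zero]; omega
  obtain ⟨p, hp⟩ := SimpleGraph.exists_walk_support_eq_of_isChain (h.isChain_adj hv hne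
    (fun x hx => (hS x hx).1) S.nodup_toList hu (fun hx => (hS u hx).2.1 rfl)
    (fun hx => (hS v hx).2.2 rfl))
  refine ⟨p, ?_, ?_, ?_⟩
  · rw [SimpleGraph.Walk.isPath_def, hp]
    grind [List.nodup_cons, List.nodup_append, Finset.nodup_toList]
  · have := congrArg List.length hp
    simp only [SimpleGraph.Walk.length_support, List.length_cons, List.length_append,
      Finset.length_toList, List.length_nil] at this
    omega
  · intro x hx
    rw [hp] at hx
    grind [h.1]
end

section
/- Let G be a graph on n ≥ 9 vertices with minimum degree δ(G) ≥ n/4. Then the girth of G is at most 5, i.e., G contains a cycle of length at most 5. -/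
open SimpleGraph

/-- `G` contains a cycle of length `n` (a copy of `C_n`). -/
def HasNCycle {V : Type*} (G : SimpleGraph V) (n : ℕ) : Prop :=
  ∃ (v : V) (c : G.Walk v v), c.IsCycle ∧ c.length = n

lemma hasC3 {V : Type*} {G : SimpleGraph V} {a b c : V}
    (hab : G.Adj a b) (hbc : G.Adj b c) (hca : G.Adj c a) : HasNCycle G 3 := by
  refine ⟨a, .cons hab (.cons hbc (.cons hca .nil)), ?_, rfl⟩
  have h1 := hab.ne; have h2 := hbc.ne; have h3 := hca.ne
  simp [Walk.isCycle_def, Walk.isTrail_def, Sym2.eq, Sym2.rel_iff', *]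
  aesop

lemma hasC4 {V : Type*} {G : SimpleGraph V} {a b c d : V}
    (hab : G.Adj a b) (hbc : G.Adj b c) (hcd : G.Adj c d) (hda : G.Adj d a)
    (hac : a ≠ c) (hbd : b ≠ d) : HasNCycle G 4 := by
  refine ⟨a, .cons hab (.cons hbc (.cons hcd (.cons hda .nil))), ?_, rfl⟩
  have h1 := hab.ne; have h2 := hbc.ne; have h3 := hcd.ne; have h4 := hda.ne
  simp [Walk.isCycle_def, Walk.isTrail_def, Sym2.eq, Sym2.rel_iff', *]
  aesop

lemma hasC5 {V : Type*} {G : SimpleGraph V} {a b c d e : V}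
    (hab : G.Adj a b) (hbc : G.Adj b c) (hcd : G.Adj c d) (hde : G.Adj d e) (hea : G.Adj e a)
    (hac : a ≠ c) (had : a ≠ d) (hbd : b ≠ d) (hbe : b ≠ e) (hce : c ≠ e) : HasNCycle G 5 := by
  refine ⟨a, .cons hab (.cons hbc (.cons hcd (.cons hde (.cons hea .nil)))), ?_, rfl⟩
  have h1 := hab.ne; have h2 := hbc.ne; have h3 := hcd.ne; have h4 := hde.ne; have h5 := hea.ne
  simp [Walk.isCycle_def, Walk.isTrail_def, Sym2.eq, Sym2.rel_iff', *]
  aesop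

theorem stmt6 {V : Type*} [Fintype V] (G : SimpleGraph V) (n : ℕ)
    (hn : Fintype.card V = n) (h9 : 9 ≤ n)
    (hδ : ∀ v : V, (n : ℝ) / 4 ≤ ((G.neighborSet v).ncard : ℝ)) :
    ∃ t : ℕ, t ≤ 5 ∧ HasNCycle G t := by
  classical
  by_contra hcon
  push_neg at hcon
  -- no cycles of length 3,4,5
  have h3 : ∀ a b c : V, G.Adj a b → G.Adj b c → G.Adj c a → False := fun a b c hab hbc hca =>
    hcon 3 (by norm_num) (hasC3 hab hbc hca)
  have h4 : ∀ a b c e : V, G.Adj a b → G.Adj b c → G.Adj c e → G.Adj e a → a ≠ c → b ≠ e →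
      False := fun a b c e hab hbc hce hea hac hbe =>
    hcon 4 (by norm_num) (hasC4 hab hbc hce hea hac hbe)
  have h5 : ∀ a b c e k : V, G.Adj a b → G.Adj b c → G.Adj c e → G.Adj e k → G.Adj k a →
      a ≠ c → a ≠ e → b ≠ e → b ≠ k → c ≠ k → False :=
    fun a b c e k hab hbc hce hek hka hac hae hbe hbk hck =>
    hcon 5 (by norm_num) (hasC5 hab hbc hce hek hka hac hae hbe hbk hck)
  -- degree bound
  have hdeg : ∀ w : V, (n + 3) / 4 ≤ G.degree w := by
    intro w
    have h1 := hδ w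
    have h2 : ((G.neighborSet w).ncard : ℝ) = (G.degree w : ℝ) := by
      congr 1
      rw [Set.ncard_eq_toFinset_card', SimpleGraph.degree, ← SimpleGraph.neighborFinset_def]
    have h3 : (n : ℝ) ≤ 4 * (G.degree w : ℝ) := by rw [h2] at h1; linarith
    have h4 : (n : ℕ) ≤ 4 * G.degree w := by exact_mod_cast h3
    omega
  set d : ℕ := (n + 3) / 4 with hdval
  have hd3 : 3 ≤ d := by omega
  have hn4d : n ≤ 4 * d := by omega
  -- pick an edge
  have hne : Nonempty V := by rw [← Fintype.card_pos_iff]; omega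
  obtain ⟨u⟩ := hne
  have hdu : 0 < (G.neighborFinset u).card := lt_of_lt_of_le (by omega) (hdeg u)
  obtain ⟨v, hv'⟩ := Finset.card_pos.mp hdu
  have hv : G.Adj u v := by rwa [SimpleGraph.mem_neighborFinset] at hv'
  set A : Finset V := G.neighborFinset u \ {v} with hA
  set B : Finset V := G.neighborFinset v \ {u} with hB
  set f : V → Finset V := fun a => G.neighborFinset a \ {u} with hf
  set g : V → Finset V := fun b => G.neighborFinset b \ {v} with hg
  have memA : ∀ {a}, a ∈ A ↔ G.Adj u a ∧ a ≠ v := by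
    intro a; simp [hA, SimpleGraph.mem_neighborFinset]
  have memB : ∀ {b}, b ∈ B ↔ G.Adj v b ∧ b ≠ u := by
    intro b; simp [hB, SimpleGraph.mem_neighborFinset]
  have memf : ∀ {a w}, w ∈ f a ↔ G.Adj a w ∧ w ≠ u := by
    intro a w; simp [hf, SimpleGraph.mem_neighborFinset]
  have memg : ∀ {b w}, w ∈ g b ↔ G.Adj b w ∧ w ≠ v := by
    intro b w; simp [hg, SimpleGraph.mem_neighborFinset]
  -- members of A are not adjacent to v, members of B not adjacent to u
  have hAnv : ∀ a ∈ A, ¬ G.Adj v a := by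
    intro a ha hva
    exact h3 u a v (memA.mp ha).1 hva.symm hv.symm
  have hBnu : ∀ b ∈ B, ¬ G.Adj u b := by
    intro b hb hub
    exact h3 u b v hub (memB.mp hb).1.symm hv.symm
  -- basic non-memberships
  have nuA : u ∉ A := fun h => G.irrefl (memA.mp h).1
  have nvA : v ∉ A := fun h => (memA.mp h).2 rfl
  have nuB : u ∉ B := fun h => (memB.mp h).2 rfl
  have nvB : v ∉ B := fun h => G.irrefl (memB.mp h).1
  have nvf : ∀ a ∈ A, v ∉ f a := by
    intro a ha hvfa
    exact h3 u a v (memA.mp ha).1 (memf.mp hvfa).1 hv.symm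
  have nuf : ∀ a, u ∉ f a := fun a h => (memf.mp h).2 rfl
  have nug : ∀ b ∈ B, u ∉ g b := by
    intro b hb hugb
    exact hBnu b hb (memg.mp hugb).1.symm
  have nvg : ∀ b, v ∉ g b := fun b h => (memg.mp h).2 rfl
  have nAf : ∀ a ∈ A, ∀ w ∈ f a, w ∉ A := by
    intro a ha w hw hwA
    exact h3 u a w (memA.mp ha).1 (memf.mp hw).1 (memA.mp hwA).1.symm
  have nBf : ∀ a ∈ A, ∀ w ∈ f a, w ∉ B := by
    intro a ha w hw hwB
    exact h4 u a w v (memA.mp ha).1 (memf.mp hw).1 (memB.mp hwB).1.symm hv.symm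
      (fun h => (memf.mp hw).2 h.symm) (memA.mp ha).2
  have nBg : ∀ b ∈ B, ∀ w ∈ g b, w ∉ B := by
    intro b hb w hw hwB
    exact h3 v b w (memB.mp hb).1 (memg.mp hw).1 (memB.mp hwB).1.symm
  have nAg : ∀ b ∈ B, ∀ w ∈ g b, w ∉ A := by
    intro b hb w hw hwA
    exact h4 v b w u (memB.mp hb).1 (memg.mp hw).1 (memA.mp hwA).1.symm hv
      (fun h => (memg.mp hw).2 h.symm) (memB.mp hb).2
  have hABdisj : Disjoint A B := by
    rw [Finset.disjoint_left]
    intro x hxA hxB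
    exact hAnv x hxA (memB.mp hxB).1
  have hfdisj : ∀ a ∈ A, ∀ a' ∈ A, a ≠ a' → Disjoint (f a) (f a') := by
    intro a ha a' ha' hne'
    rw [Finset.disjoint_left]
    intro w hw hw'
    exact h4 u a w a' (memA.mp ha).1 (memf.mp hw).1 (memf.mp hw').1.symm (memA.mp ha').1.symm
      (fun h => (memf.mp hw).2 h.symm) hne'
  have hgdisj : ∀ b ∈ B, ∀ b' ∈ B, b ≠ b' → Disjoint (g b) (g b') := by
    intro b hb b' hb' hne'
    rw [Finset.disjoint_left]
    intro w hw hw'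
    exact h4 v b w b' (memB.mp hb).1 (memg.mp hw).1 (memg.mp hw').1.symm (memB.mp hb').1.symm
      (fun h => (memg.mp hw).2 h.symm) hne'
  have hfgdisj : ∀ a ∈ A, ∀ b ∈ B, Disjoint (f a) (g b) := by
    intro a ha b hb
    rw [Finset.disjoint_left]
    intro w hw hw'
    have hab : a ≠ b := fun h => hAnv a ha (h ▸ (memB.mp hb).1)
    exact h5 u a w b v (memA.mp ha).1 (memf.mp hw).1 (memg.mp hw').1.symm (memB.mp hb).1.symm
      hv.symm (fun h => (memf.mp hw).2 h.symm) (fun h => (memB.mp hb).2 h.symm)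
      hab (memA.mp ha).2 (memg.mp hw').2
  -- cardinalities
  have cardA : d - 1 ≤ A.card := by
    have hsub : ({v} : Finset V) ⊆ G.neighborFinset u := by
      simp [SimpleGraph.mem_neighborFinset, hv]
    have h1 : A.card = (G.neighborFinset u).card - 1 := by
      rw [hA, Finset.card_sdiff_of_subset hsub, Finset.card_singleton]
    have h2 := hdeg u
    have h0 : G.degree u = (G.neighborFinset u).card := rfl
    omega
  have cardB : d - 1 ≤ B.card := by
    have hsub : ({u} : Finset V) ⊆ G.neighborFinset v := by
      simp [SimpleGraph.mem_neighborFinset, hv.symm]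
    have h1 : B.card = (G.neighborFinset v).card - 1 := by
      rw [hB, Finset.card_sdiff_of_subset hsub, Finset.card_singleton]
    have h2 := hdeg v
    have h0 : G.degree v = (G.neighborFinset v).card := rfl
    omega
  have cardf : ∀ a ∈ A, d - 1 ≤ (f a).card := by
    intro a ha
    have hsub : ({u} : Finset V) ⊆ G.neighborFinset a := by
      simp [SimpleGraph.mem_neighborFinset, (memA.mp ha).1.symm]
    have h1 : (f a).card = (G.neighborFinset a).card - 1 := by
      rw [hf]
      simp only
      rw [Finset.card_sdiff_of_subset hsub, Finset.card_singleton]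
    have h2 := hdeg a
    have h0 : G.degree a = (G.neighborFinset a).card := rfl
    omega
  have cardg : ∀ b ∈ B, d - 1 ≤ (g b).card := by
    intro b hb
    have hsub : ({v} : Finset V) ⊆ G.neighborFinset b := by
      simp [SimpleGraph.mem_neighborFinset, (memB.mp hb).1.symm]
    have h1 : (g b).card = (G.neighborFinset b).card - 1 := by
      rw [hg]
      simp only
      rw [Finset.card_sdiff_of_subset hsub, Finset.card_singleton]
    have h2 := hdeg b
    have h0 : G.degree b = (G.neighborFinset b).card := rfl
    omega
  have cardFb : (d - 1) * (d - 1) ≤ (A.biUnion f).card := by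
    rw [Finset.card_biUnion hfdisj]
    calc (d - 1) * (d - 1) ≤ A.card * (d - 1) :=
          Nat.mul_le_mul_right _ cardA
      _ = A.card • (d - 1) := by rw [smul_eq_mul]
      _ ≤ ∑ a ∈ A, (f a).card := Finset.card_nsmul_le_sum A _ _ cardf
  have cardGb : (d - 1) * (d - 1) ≤ (B.biUnion g).card := by
    rw [Finset.card_biUnion hgdisj]
    calc (d - 1) * (d - 1) ≤ B.card * (d - 1) :=
          Nat.mul_le_mul_right _ cardB
      _ = B.card • (d - 1) := by rw [smul_eq_mul]
      _ ≤ ∑ b ∈ B, (g b).card := Finset.card_nsmul_le_sum B _ _ cardg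
  -- assemble the big set
  set S : Finset V := ({u, v} : Finset V) ∪ (A ∪ (B ∪ (A.biUnion f ∪ B.biUnion g))) with hS
  have d1 : Disjoint (A.biUnion f) (B.biUnion g) := by
    rw [Finset.disjoint_biUnion_left]
    intro a ha
    rw [Finset.disjoint_biUnion_right]
    intro b hb
    exact hfgdisj a ha b hb
  have d2 : Disjoint B (A.biUnion f ∪ B.biUnion g) := by
    rw [Finset.disjoint_union_right, Finset.disjoint_biUnion_right,
      Finset.disjoint_biUnion_right]
    constructor
    · intro a ha
      rw [Finset.disjoint_left]
      exact fun w hwB hwf => nBf a ha w hwf hwB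
    · intro b hb
      rw [Finset.disjoint_left]
      exact fun w hwB hwg => nBg b hb w hwg hwB
  have d3 : Disjoint A (B ∪ (A.biUnion f ∪ B.biUnion g)) := by
    rw [Finset.disjoint_union_right, Finset.disjoint_union_right,
      Finset.disjoint_biUnion_right, Finset.disjoint_biUnion_right]
    refine ⟨hABdisj, ?_, ?_⟩
    · intro a ha
      rw [Finset.disjoint_left]
      exact fun w hwA hwf => nAf a ha w hwf hwA
    · intro b hb
      rw [Finset.disjoint_left]
      exact fun w hwA hwg => nAg b hb w hwg hwA
  have d4 : Disjoint ({u, v} : Finset V) (A ∪ (B ∪ (A.biUnion f ∪ B.biUnion g))) := by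
    rw [Finset.disjoint_left]
    intro x hx hx'
    simp only [Finset.mem_insert, Finset.mem_singleton] at hx
    simp only [Finset.mem_union, Finset.mem_biUnion] at hx'
    rcases hx with rfl | rfl
    · rcases hx' with h | h | ⟨a, ha, hw⟩ | ⟨b, hb, hw⟩
      · exact nuA h
      · exact nuB h
      · exact nuf a hw
      · exact nug b hb hw
    · rcases hx' with h | h | ⟨a, ha, hw⟩ | ⟨b, hb, hw⟩
      · exact nvA h
      · exact nvB h
      · exact nvf a ha hw
      · exact nvg b hw
  have cardS : 2 + ((d - 1) + ((d - 1) + ((d - 1) * (d - 1) + (d - 1) * (d - 1)))) ≤ S.card := by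
    rw [hS, Finset.card_union_of_disjoint d4, Finset.card_union_of_disjoint d3,
      Finset.card_union_of_disjoint d2, Finset.card_union_of_disjoint d1,
      Finset.card_pair hv.ne]
    gcongr
  have hSn : S.card ≤ n := hn ▸ Finset.card_le_univ S
  have key : 2 * (d - 1) ≤ (d - 1) * (d - 1) :=
    Nat.mul_le_mul_right _ (by omega)
  omega
end

section
/- Let k ≥ 6 be an integer and suppose K_N has a red-blue edge coloring with no blue copy of W_{2k+1}. Let X_1, X_2, X_3 be pairwise disjoint sets of vertices of K_N with |X_3| ≥ 1, such that every edge with endpoints in two distinct sets X_i, X_j (1 ≤ i < j ≤ 3) is blue, and such that there exist U_1 ⊆ X_1 with |U_1| ≥ k+1 and U_2 ⊆ X_2 with |U_2| ≥ k where U_1 and U_2 each induce a complete subgraph of G^R. Then every edge with both endpoints inside the same set X_i (i ∈ {1,2,3}) is red. -/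
/-!
A blue edge `uv` inside a part `P` with `|P| ≥ k + 1`, next to a part `Q` with `|Q| ≥ k` that is
joined to `P` completely in blue, closes the odd cycle `u, v, q₀, p₀, q₁, p₁, …, q_{k-1}` of
length `2k + 1`, alternating between `Q` and `P \ {u, v}`; any vertex of the third part is a blue
hub for it. The red clique `U₁` makes `X₁` large enough, and for an edge inside `X₂` one of its
endpoints lies outside the red clique `U₂`, so `X₂` is large enough too. For an edge `uv` inside
`X₃`, the vertex `v` together with `X₂` plays the role of `P`, with `X₁` as `Q` and `u` as hub.
-/

/-- `G` contains a copy of the wheel `W_n = C_n ∗ K_1`: a cycle of length `n`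
together with a hub adjacent to all of its vertices. -/
def HasNWheel {V : Type*} (G : SimpleGraph V) (n : ℕ) : Prop :=
  ∃ (w v : V) (c : G.Walk v v), c.IsCycle ∧ c.length = n ∧ ∀ x ∈ c.support, G.Adj w x

open Set

theorem Nat.eq_zero_or_eq_one_or_two_mul_add_two_or_three (i : ℕ) :
    i = 0 ∨ i = 1 ∨ (∃ j, i = 2 * j + 2) ∨ ∃ j, i = 2 * j + 3 := by
  obtain ⟨j, rfl | rfl⟩ := Nat.even_or_odd' i <;> rcases j with _ | j
  · omega
  · exact .inr <| .inr <| .inl ⟨j, by ring⟩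
  · omega
  · exact .inr <| .inr <| .inr ⟨j, by ring⟩

theorem Finset.exists_mapsTo_injOn_Iio {α : Type*} [Nonempty α] (s : Finset α) {n : ℕ}
    (hn : n ≤ s.card) : ∃ f : ℕ → α, MapsTo f (Set.Iio n) s ∧ InjOn f (Set.Iio n) := by
  classical
  refine ⟨fun j => if h : j < s.card then s.equivFin.symm ⟨j, h⟩ else Classical.arbitrary α,
    fun j hj => ?_, fun i hi j hj hij => ?_⟩
  · simp [dif_pos (lt_of_lt_of_le hj hn)]
  · simp only [dif_pos (lt_of_lt_of_le hi hn), dif_pos (lt_of_lt_of_le hj hn)] at hij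
    simpa using s.equivFin.symm.injective (Subtype.ext hij)

namespace SimpleGraph

variable {V : Type*} {G : SimpleGraph V}

theorem hasNWheel_of_adj_add_one {n : ℕ} (f : Fin (n + 3) → V) (hf : Function.Injective f)
    (hadj : ∀ i, G.Adj (f i) (f (i + 1))) (w : V) (hw : ∀ i, G.Adj w (f i)) :
    HasNWheel G (n + 3) := by
  let φ : cycleGraph (n + 3) →g G :=
    ⟨f, fun {u v} huv => by
      rcases cycleGraph_adj.mp huv with h | h
      · rw [sub_eq_iff_eq_add'.mp h]
        exact (hadj v).symm
      · rw [sub_eq_iff_eq_add'.mp h]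
        exact hadj u⟩
  refine ⟨w, f 0, (cycleGraph.cycle n).map φ,
    (Walk.isCycle_map_iff_of_injective hf).mpr cycleGraph.isCycle_cycle, by simp, ?_⟩
  simp only [Walk.support_map, List.mem_map]
  rintro _ ⟨i, -, rfl⟩
  exact hw i

theorem hasNWheel_of_injOn {n : ℕ} (g : ℕ → V) (hg : InjOn g (Iio (n + 3)))
    (hadj : ∀ i < n + 2, G.Adj (g i) (g (i + 1))) (hclose : G.Adj (g (n + 2)) (g 0))
    (w : V) (hw : ∀ i < n + 3, G.Adj w (g i)) : HasNWheel G (n + 3) := by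
  refine hasNWheel_of_adj_add_one (fun i => g i) (fun i j h => Fin.ext (hg i.2 j.2 h))
    (fun i => ?_) w (fun i => hw i i.2)
  rw [Fin.val_add_one]
  split_ifs with h
  · subst h
    exact hclose
  · exact hadj i (by have := Fin.val_lt_last h; omega)

def oddRim (x y : V) (a b : ℕ → V) : ℕ → V
  | 0 => x
  | 1 => y
  | i + 2 => if i % 2 = 0 then a (i / 2) else b (i / 2)

section oddRim

variable {x y : V} {a b : ℕ → V} {m : ℕ}

@[simp] theorem oddRim_zero : oddRim x y a b 0 = x := rfl

@[simp] theorem oddRim_one : oddRim x y a b 1 = y := rfl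

@[simp] theorem oddRim_two_mul_add_two (j : ℕ) : oddRim x y a b (2 * j + 2) = a j := by
  simp [oddRim]

@[simp] theorem oddRim_two_mul_add_three (j : ℕ) : oddRim x y a b (2 * j + 3) = b j := by
  simp [oddRim, Nat.add_mod, Nat.add_div]

theorem injOn_oddRim (hxy : x ≠ y) (hxa : ∀ j ≤ m, x ≠ a j) (hya : ∀ j ≤ m, y ≠ a j)
    (hxb : ∀ j < m, x ≠ b j) (hyb : ∀ j < m, y ≠ b j) (hab : ∀ i ≤ m, ∀ j < m, a i ≠ b j)
    (ha : InjOn a (Iio (m + 1))) (hb : InjOn b (Iio m)) :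
    InjOn (oddRim x y a b) (Iio (2 * m + 3)) := by
  intro i hi j hj hij
  simp only [Set.mem_Iio] at hi hj
  rcases Nat.eq_zero_or_eq_one_or_two_mul_add_two_or_three i
    with rfl | rfl | ⟨i, rfl⟩ | ⟨i, rfl⟩ <;>
  rcases Nat.eq_zero_or_eq_one_or_two_mul_add_two_or_three j
    with rfl | rfl | ⟨j, rfl⟩ | ⟨j, rfl⟩ <;>
  simp only [oddRim_zero, oddRim_one, oddRim_two_mul_add_two, oddRim_two_mul_add_three] at hij
  all_goals grind [Set.InjOn]

theorem oddRim_adj_add_one (hxy : G.Adj x y) (hya : G.Adj y (a 0))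
    (hab : ∀ j < m, G.Adj (a j) (b j)) (hba : ∀ j < m, G.Adj (b j) (a (j + 1))) :
    ∀ i < 2 * m + 2, G.Adj (oddRim x y a b i) (oddRim x y a b (i + 1)) := by
  intro i hi
  rcases Nat.eq_zero_or_eq_one_or_two_mul_add_two_or_three i
    with rfl | rfl | ⟨i, rfl⟩ | ⟨i, rfl⟩
  · exact hxy
  · exact hya
  · simpa using hab i (by omega)
  · rw [show 2 * i + 3 + 1 = 2 * (i + 1) + 2 by ring]
    simpa using hba i (by omega)

end oddRim

theorem hasNWheel_two_mul_add_three {P Q : Finset V} {m : ℕ} (hP : m + 2 ≤ P.card)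
    (hQ : m + 1 ≤ Q.card) (hPQ : ∀ p ∈ P, ∀ q ∈ Q, G.Adj p q) {u v : V} (hu : u ∈ P)
    (hv : v ∈ P) (huv : G.Adj u v) (w : V) (hwP : ∀ p ∈ P, G.Adj w p)
    (hwQ : ∀ q ∈ Q, G.Adj w q) :
    HasNWheel G (2 * m + 3) := by
  classical
  set B := (P.erase u).erase v
  have hB : m ≤ B.card := by
    rw [Finset.card_erase_of_mem (Finset.mem_erase.mpr ⟨huv.ne.symm, hv⟩),
      Finset.card_erase_of_mem hu]
    omega
  have : Nonempty V := ⟨u⟩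
  obtain ⟨a, ha_mem, ha⟩ := Q.exists_mapsTo_injOn_Iio hQ
  obtain ⟨b, hbB, hb⟩ := B.exists_mapsTo_injOn_Iio hB
  have haQ : ∀ j ≤ m, a j ∈ Q := fun j hj => ha_mem (Nat.lt_succ_of_le hj)
  have hbP : ∀ j < m, b j ∈ P := fun j hj =>
    Finset.mem_of_mem_erase (Finset.mem_of_mem_erase (hbB hj))
  refine hasNWheel_of_injOn (oddRim u v a b) (injOn_oddRim huv.ne ?_ ?_ ?_ ?_ ?_ ha hb)
    (oddRim_adj_add_one huv ?_ ?_ ?_) ?_ w ?_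
  · exact fun j hj => (hPQ u hu _ (haQ j hj)).ne
  · exact fun j hj => (hPQ v hv _ (haQ j hj)).ne
  · exact fun j hj h => by simpa [B, ← h] using hbB hj
  · exact fun j hj h => by simpa [B, ← h] using hbB hj
  · exact fun i hi j hj => (hPQ _ (hbP j hj) _ (haQ i hi)).ne.symm
  · exact hPQ v hv _ (haQ 0 (Nat.zero_le m))
  · exact fun j hj => (hPQ _ (hbP j hj) _ (haQ j hj.le)).symm
  · exact fun j hj => hPQ _ (hbP j hj) _ (haQ (j + 1) hj)
  · simpa using (hPQ u hu _ (haQ m le_rfl)).symm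
  · intro i hi
    rcases Nat.eq_zero_or_eq_one_or_two_mul_add_two_or_three i
      with rfl | rfl | ⟨i, rfl⟩ | ⟨i, rfl⟩
    · exact hwP u hu
    · exact hwP v hv
    · simpa using hwQ _ (haQ i (by omega))
    · simpa using hwP _ (hbP i (by omega))

theorem hasNWheel_two_mul_add_three_of_adj {P Q : Finset V} {m : ℕ} (hP : m + 1 ≤ P.card)
    (hQ : m + 1 ≤ Q.card) (hPQ : ∀ p ∈ P, ∀ q ∈ Q, G.Adj p q) {u v : V} (huv : G.Adj u v)
    (huP : ∀ p ∈ P, G.Adj u p) (huQ : ∀ q ∈ Q, G.Adj u q) (hvP : ∀ p ∈ P, G.Adj v p)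
    (hvQ : ∀ q ∈ Q, G.Adj v q) :
    HasNWheel G (2 * m + 3) := by
  classical
  -- `v` joins `Q` as an extra vertex of the larger part, and `u` becomes the hub.
  obtain ⟨b, hb⟩ : Q.Nonempty := Finset.card_pos.mp (by omega)
  refine hasNWheel_two_mul_add_three (P := insert v Q) (Q := P) ?_ hP ?_
    (Finset.mem_insert_self v Q) (Finset.mem_insert_of_mem hb) (hvQ b hb) u ?_ huP
  · rw [Finset.card_insert_of_notMem fun h => (hvQ v h).ne rfl]
    omega
  · intro q hq p hp
    rcases Finset.mem_insert.mp hq with rfl | hq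
    · exact hvP p hp
    · exact (hPQ p hp q hq).symm
  · intro q hq
    rcases Finset.mem_insert.mp hq with rfl | hq
    · exact huv
    · exact huQ q hq

end SimpleGraph

open SimpleGraph

theorem stmt10_general (k N : ℕ) (hk : 6 ≤ k)
    (R : SimpleGraph (Fin N))
    (hblue : ¬ HasNWheel Rᶜ (2 * k + 1))
    (X₁ X₂ X₃ : Finset (Fin N))
    (hc3 : 1 ≤ X₃.card)
    (hcross : ∀ u v : Fin N,
      ((u ∈ X₁ ∧ v ∈ X₂) ∨ (u ∈ X₁ ∧ v ∈ X₃) ∨ (u ∈ X₂ ∧ v ∈ X₃)) → Rᶜ.Adj u v)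
    (hU1 : ∃ U₁ ⊆ X₁, k + 1 ≤ U₁.card ∧ ∀ x ∈ U₁, ∀ y ∈ U₁, x ≠ y → R.Adj x y)
    (hU2 : ∃ U₂ ⊆ X₂, k ≤ U₂.card ∧ ∀ x ∈ U₂, ∀ y ∈ U₂, x ≠ y → R.Adj x y) :
    (∀ u ∈ X₁, ∀ v ∈ X₁, u ≠ v → R.Adj u v) ∧
    (∀ u ∈ X₂, ∀ v ∈ X₂, u ≠ v → R.Adj u v) ∧
    (∀ u ∈ X₃, ∀ v ∈ X₃, u ≠ v → R.Adj u v) := by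
  obtain ⟨m, rfl⟩ : ∃ m, k = m + 1 := ⟨k - 1, by omega⟩
  rw [show 2 * (m + 1) + 1 = 2 * m + 3 by ring] at hblue
  obtain ⟨U₁, hU₁X₁, hU₁, -⟩ := hU1
  obtain ⟨U₂, hU₂X₂, hU₂, hU₂red⟩ := hU2
  obtain ⟨z, hz⟩ := Finset.card_pos.mp hc3
  have h12 : ∀ p ∈ X₁, ∀ q ∈ X₂, Rᶜ.Adj p q := fun p hp q hq => hcross p q (.inl ⟨hp, hq⟩)
  have h13 : ∀ p ∈ X₁, ∀ q ∈ X₃, Rᶜ.Adj q p := fun p hp q hq =>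
    (hcross p q (.inr (.inl ⟨hp, hq⟩))).symm
  have h23 : ∀ p ∈ X₂, ∀ q ∈ X₃, Rᶜ.Adj q p := fun p hp q hq =>
    (hcross p q (.inr (.inr ⟨hp, hq⟩))).symm
  have hX₁ : m + 2 ≤ X₁.card := hU₁.trans (Finset.card_le_card hU₁X₁)
  have hX₂ : m + 1 ≤ X₂.card := hU₂.trans (Finset.card_le_card hU₂X₂)
  refine ⟨?_, ?_, ?_⟩ <;> intro u hu v hv huv <;> by_contra hred <;> apply hblue <;>
    have hblue_uv : Rᶜ.Adj u v := ⟨huv, hred⟩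
  · exact hasNWheel_two_mul_add_three hX₁ hX₂ h12 hu hv hblue_uv z
      (fun p hp => h13 p hp z hz) (fun q hq => h23 q hq z hz)
  · have hU₂X₂ : U₂ ⊂ X₂ := by
      refine (Finset.ssubset_iff_of_subset hU₂X₂).mpr ?_
      by_cases huU₂ : u ∈ U₂
      · exact ⟨v, hv, fun hvU₂ => hred (hU₂red u huU₂ v hvU₂ huv)⟩
      · exact ⟨u, hu, huU₂⟩
    exact hasNWheel_two_mul_add_three (hU₂.trans_lt (Finset.card_lt_card hU₂X₂)) (by omega)
      (fun p hp q hq => (h12 q hq p hp).symm) hu hv hblue_uv z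
      (fun q hq => h23 q hq z hz) (fun p hp => h13 p hp z hz)
  · exact hasNWheel_two_mul_add_three_of_adj (by omega) hX₂ h12 hblue_uv
      (fun p hp => h13 p hp u hu) (fun q hq => h23 q hq u hu)
      (fun p hp => h13 p hp v hv) (fun q hq => h23 q hq v hv)

theorem stmt10 (k N : ℕ) (hk : 6 ≤ k)
    (R : SimpleGraph (Fin N))
    (hblue : ¬ HasNWheel Rᶜ (2 * k + 1))
    (X₁ X₂ X₃ : Finset (Fin N))
    (hd12 : Disjoint X₁ X₂) (hd13 : Disjoint X₁ X₃) (hd23 : Disjoint X₂ X₃)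
    (hc3 : 1 ≤ X₃.card)
    (hcross : ∀ u v : Fin N,
      ((u ∈ X₁ ∧ v ∈ X₂) ∨ (u ∈ X₁ ∧ v ∈ X₃) ∨ (u ∈ X₂ ∧ v ∈ X₃)) → Rᶜ.Adj u v)
    (hU1 : ∃ U₁ ⊆ X₁, k + 1 ≤ U₁.card ∧ ∀ x ∈ U₁, ∀ y ∈ U₁, x ≠ y → R.Adj x y)
    (hU2 : ∃ U₂ ⊆ X₂, k ≤ U₂.card ∧ ∀ x ∈ U₂, ∀ y ∈ U₂, x ≠ y → R.Adj x y) :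
    (∀ u ∈ X₁, ∀ v ∈ X₁, u ≠ v → R.Adj u v) ∧
    (∀ u ∈ X₂, ∀ v ∈ X₂, u ≠ v → R.Adj u v) ∧
    (∀ u ∈ X₃, ∀ v ∈ X₃, u ≠ v → R.Adj u v) :=
  stmt10_general k N hk R hblue X₁ X₂ X₃ hc3 hcross hU1 hU2
end

section
/- Let 2 < k < j be integers and let K_N have a red-blue edge coloring with no red copy of C_{2k+1} and no blue copy of W_{2j}. Let w be a vertex of K_N and let H be the set of blue neighbors of w, with |H| ≥ 3j. Then the blue graph H^B induced on H is not bipartite. -/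
/-- `G` is bipartite: the vertices split into two parts with all edges across. -/
def IsBipartite {V : Type*} (G : SimpleGraph V) : Prop :=
  ∃ A : Set V, ∀ u v, G.Adj u v → (u ∈ A ↔ v ∉ A)

/-! A bipartition of `H^B` splits `H` into two red cliques `X` and `Y`. A red clique has fewer
than `2k + 1` vertices, so both `X` and `Y` have at least `3j - 2k ≥ j + 2` vertices. Two
disjoint red edges between `X` and `Y`, joined by red paths of lengths `k - 1` and `k` inside the
cliques, would close a red `C_{2k+1}`; hence all red `X`–`Y` edges pass through one vertex `c`.
Without `c`, the two sides have at least `j` vertices each and are completely joined in blue, so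
they carry a blue `C_{2j}`, which lies in the blue neighbourhood of `w`: a blue `W_{2j}`. -/

namespace SimpleGraph

variable {V : Type*} {G : SimpleGraph V}

lemma Walk.IsPath.isCycle_cons {u v : V} (h : G.Adj u v) {p : G.Walk v u} (hp : p.IsPath)
    (hlen : 2 ≤ p.length) : (Walk.cons h p).IsCycle :=
  Walk.isCycle_iff_isPath_tail_and_le_length.mpr ⟨by simpa using hp, by simp; omega⟩

lemma IsClique.exists_isPath {S : Set V} (hS : G.IsClique S) {u v : V} (hu : u ∈ S) (hv : v ∈ S)
    (huv : u ≠ v) {ℓ : ℕ} (hℓ : 1 ≤ ℓ) (hℓS : ℓ < S.ncard) :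
    ∃ p : G.Walk u v, p.IsPath ∧ p.length = ℓ ∧ ∀ x ∈ p.support, x ∈ S := by
  induction ℓ, hℓ using Nat.le_induction generalizing S u with
  | base => exact ⟨.cons (hS hu hv huv) .nil, by simp [huv], rfl, by simp [hu, hv]⟩
  | succ ℓ hℓ ih =>
    have hpair : ({u, v} : Set V) ⊆ S := Set.insert_subset hu (Set.singleton_subset_iff.mpr hv)
    obtain ⟨w, ⟨hwS, hwuv⟩⟩ : (S \ {u, v}).Nonempty := by
      refine Set.nonempty_of_ncard_ne_zero ?_
      rw [Set.ncard_sdiff hpair, Set.ncard_pair huv]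
      omega
    obtain ⟨hwu, hwv⟩ : w ≠ u ∧ w ≠ v := by simpa [not_or] using hwuv
    obtain ⟨p, hp, hlen, hsupp⟩ :=
      ih (S := S \ {u}) (hS.subset Set.sdiff_subset) ⟨hwS, hwu⟩ ⟨hv, huv.symm⟩ hwv
      (by have := Set.pred_ncard_le_ncard_sdiff_singleton S u; omega)
    refine ⟨.cons (hS hu hwS hwu.symm) p, hp.cons fun hup => (hsupp u hup).2 rfl,
      by simp [hlen], ?_⟩
    simp only [Walk.support_cons, List.mem_cons, forall_eq_or_imp]
    exact ⟨hu, fun x hx => (hsupp x hx).1⟩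

lemma exists_isPath_of_forall_adj {X Y : Set V} (hXY : ∀ x ∈ X, ∀ y ∈ Y, G.Adj x y)
    {x y : V} (hx : x ∈ X) (hy : y ∈ Y) {ℓ : ℕ} (hX : ℓ < X.ncard) (hY : ℓ < Y.ncard) :
    ∃ p : G.Walk x y, p.IsPath ∧ p.length = 2 * ℓ + 1 ∧ ∀ z ∈ p.support, z ∈ X ∪ Y := by
  induction ℓ generalizing X Y x with
  | zero =>
    exact ⟨.cons (hXY x hx y hy) .nil, by simp [(hXY x hx y hy).ne], rfl, by simp [hx, hy]⟩
  | succ ℓ ih =>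
    have hdisj : ∀ z ∈ X, z ∉ Y := fun z hzX hzY => (hXY z hzX z hzY).ne rfl
    obtain ⟨x', hx'X, hx'x⟩ := Set.exists_ne_of_one_lt_ncard (s := X) (by omega) x
    obtain ⟨y', hy'Y, hy'y⟩ := Set.exists_ne_of_one_lt_ncard (s := Y) (by omega) y
    obtain ⟨p, hp, hlen, hsupp⟩ := ih (X := X \ {x}) (Y := Y \ {y'})
      (fun a ha b hb => hXY a ha.1 b hb.1) ⟨hx'X, hx'x⟩ ⟨hy, hy'y.symm⟩
      (by have := Set.pred_ncard_le_ncard_sdiff_singleton X x; omega)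
      (by have := Set.pred_ncard_le_ncard_sdiff_singleton Y y'; omega)
    have hy'p : y' ∉ p.support := fun h => by
      rcases hsupp y' h with h | h
      · exact hdisj y' h.1 hy'Y
      · exact h.2 rfl
    have hxp : x ∉ p.support := fun h => by
      rcases hsupp x h with h | h
      · exact h.2 rfl
      · exact hdisj x hx h.1
    refine ⟨.cons (hXY x hx y' hy'Y) (.cons (hXY x' hx'X y' hy'Y).symm p),
      (hp.cons hy'p).cons ?_, by simp [hlen]; ring, ?_⟩
    · simp only [Walk.support_cons, List.mem_cons, not_or]
      exact ⟨(hXY x hx y' hy'Y).ne, hxp⟩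
    · simp only [Walk.support_cons, List.mem_cons, forall_eq_or_imp]
      exact ⟨Or.inl hx, Or.inr hy'Y, fun z hz => (hsupp z hz).imp (·.1) (·.1)⟩

lemma IsClique.hasNCycle {S : Set V} (hS : G.IsClique S) {n : ℕ} (hn : 3 ≤ n)
    (hnS : n ≤ S.ncard) : HasNCycle G n := by
  have hfin : S.Finite := Set.finite_of_ncard_pos (by omega)
  obtain ⟨u, hu, v, hv, huv⟩ := (Set.one_lt_ncard hfin).mp (by omega)
  obtain ⟨p, hp, hlen, -⟩ := hS.exists_isPath hv hu (Ne.symm huv) (ℓ := n - 1) (by omega)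
    (by omega)
  exact ⟨u, .cons (hS hu hv huv) p, hp.isCycle_cons _ (by omega), by simp [hlen]; omega⟩

lemma IsClique.hasNCycle_of_adj {X Y : Set V} (hX : G.IsClique X) (hY : G.IsClique Y)
    (hXY : Disjoint X Y) {a a' b b' : V} (ha : a ∈ X) (ha' : a' ∈ X) (hb : b ∈ Y) (hb' : b' ∈ Y)
    (haa' : a ≠ a') (hbb' : b ≠ b') (hab : G.Adj a b) (hab' : G.Adj a' b')
    {p q : ℕ} (hp : 1 ≤ p) (hpX : p < X.ncard) (hq : 1 ≤ q) (hqY : q < Y.ncard) :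
    HasNCycle G (p + q + 2) := by
  obtain ⟨P, hP, hPlen, hPX⟩ := hX.exists_isPath ha' ha haa'.symm hp hpX
  obtain ⟨Q, hQ, hQlen, hQY⟩ := hY.exists_isPath hb hb' hbb' hq hqY
  have hW : (Q.append (.cons hab'.symm P)).IsPath := by
    rw [Walk.isPath_def, Walk.support_append, Walk.support_cons, List.tail_cons,
      List.nodup_append]
    exact ⟨hQ.support_nodup, hP.support_nodup,
      fun x hxQ y hyP hxy => Set.disjoint_right.mp hXY (hQY x hxQ) (hxy ▸ hPX y hyP)⟩
  exact ⟨a, .cons hab (Q.append (.cons hab'.symm P)), hW.isCycle_cons _ (by simp; omega),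
    by simp [hPlen, hQlen]; omega⟩

lemma hasNWheel_of_forall_adj {X Y : Set V} (hXY : ∀ x ∈ X, ∀ y ∈ Y, G.Adj x y) {w : V}
    (hw : ∀ z ∈ X ∪ Y, G.Adj w z) {ℓ : ℕ} (hℓ : 2 ≤ ℓ) (hX : ℓ ≤ X.ncard) (hY : ℓ ≤ Y.ncard) :
    HasNWheel G (2 * ℓ) := by
  obtain ⟨x, hx⟩ := Set.nonempty_of_ncard_ne_zero (s := X) (by omega)
  obtain ⟨y, hy⟩ := Set.nonempty_of_ncard_ne_zero (s := Y) (by omega)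
  obtain ⟨p, hp, hlen, hsupp⟩ :=
    exists_isPath_of_forall_adj hXY hx hy (ℓ := ℓ - 1) (by omega) (by omega)
  refine ⟨w, y, .cons (hXY x hx y hy).symm p, hp.isCycle_cons _ (by omega),
    by simp [hlen]; omega, ?_⟩
  simp only [Walk.support_cons, List.mem_cons, forall_eq_or_imp]
  exact ⟨hw y (Or.inr hy), fun z hz => hw z (hsupp z hz)⟩

end SimpleGraph

lemma IsBipartite.exists_isClique {V : Type*} {G : SimpleGraph V} {H : Set V}
    (hH : IsBipartite (Gᶜ.induce H)) :
    ∃ X Y : Set V, Disjoint X Y ∧ X ∪ Y = H ∧ G.IsClique X ∧ G.IsClique Y := by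
  obtain ⟨A, hA⟩ := hH
  have hclique : ∀ B : Set H, (∀ u ∈ B, ∀ v ∈ B, ¬ Gᶜ.Adj u.1 v.1) →
      G.IsClique (Subtype.val '' B) := by
    rintro B hB _ ⟨u, hu, rfl⟩ _ ⟨v, hv, rfl⟩ huv
    by_contra h
    exact hB u hu v hv ⟨huv, h⟩
  refine ⟨Subtype.val '' A, Subtype.val '' Aᶜ,
    Set.disjoint_image_of_injective Subtype.val_injective disjoint_compl_right,
    by rw [← Set.image_union, Set.union_compl_self, Set.image_univ, Subtype.range_coe], ?_, ?_⟩
  · exact hclique A fun u hu v hv huv => (hA u v huv).mp hu hv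
  · exact hclique Aᶜ fun u hu v hv huv => hu ((hA u v huv).mpr hv)

lemma exists_forall_eq_or_eq_of_forall_eq_or_eq {α : Type*} [Nonempty α] {r : α → α → Prop}
    (hr : ∀ a b a' b', r a b → r a' b' → a = a' ∨ b = b') :
    ∃ c, ∀ a b, r a b → a = c ∨ b = c := by
  by_cases hall : ∃ a₀ b₀, r a₀ b₀ ∧ ∃ a₁ b₁, r a₁ b₁ ∧ a₁ ≠ a₀
  · obtain ⟨a₀, b₀, h₀, a₁, b₁, h₁, ha⟩ := hall
    have hb : b₁ = b₀ := (hr _ _ _ _ h₁ h₀).resolve_left ha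
    refine ⟨b₀, fun a b h => Or.inr ?_⟩
    by_contra hb₀
    have ha₀ : a = a₀ := (hr _ _ _ _ h h₀).resolve_right hb₀
    rcases hr _ _ _ _ h h₁ with h' | h'
    · exact ha (h' ▸ ha₀)
    · exact hb₀ (h'.trans hb)
  · push Not at hall
    by_cases hex : ∃ a₀ b₀, r a₀ b₀
    · obtain ⟨a₀, b₀, h₀⟩ := hex
      exact ⟨a₀, fun a b h => Or.inl (hall a₀ b₀ h₀ a b h)⟩
    · push Not at hex
      exact ⟨Classical.arbitrary α, fun a b h => (hex a b h).elim⟩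

theorem stmt15 (k j N : ℕ) (hk : 2 < k) (hkj : k < j)
    (R : SimpleGraph (Fin N))
    (hred : ¬ HasNCycle R (2 * k + 1))
    (hblue : ¬ HasNWheel Rᶜ (2 * j))
    (w : Fin N) (H : Set (Fin N)) (hH : H = Rᶜ.neighborSet w)
    (hcard : 3 * j ≤ H.ncard) :
    ¬ IsBipartite (Rᶜ.induce H) := by
  intro hbip
  obtain ⟨X, Y, hXY, rfl, hX, hY⟩ := hbip.exists_isClique
  have hXk : X.ncard ≤ 2 * k := not_lt.mp fun h => hred (hX.hasNCycle (by omega) h)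
  have hYk : Y.ncard ≤ 2 * k := not_lt.mp fun h => hred (hY.hasNCycle (by omega) h)
  rw [Set.ncard_union_eq hXY] at hcard
  have : Nonempty (Fin N) := ⟨w⟩
  obtain ⟨c, hc⟩ := exists_forall_eq_or_eq_of_forall_eq_or_eq
      (r := fun a b => a ∈ X ∧ b ∈ Y ∧ R.Adj a b) fun a b a' b' ⟨ha, hb, hab⟩ ⟨ha', hb', hab'⟩ => by
    by_contra! hne
    have := hX.hasNCycle_of_adj hY hXY ha ha' hb hb' hne.1 hne.2 hab hab'
      (p := k - 1) (q := k) (by omega) (by omega) (by omega) (by omega)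
    exact hred (by rwa [show k - 1 + k + 2 = 2 * k + 1 by omega] at this)
  have hblueXY : ∀ x ∈ X \ {c}, ∀ y ∈ Y \ {c}, Rᶜ.Adj x y := by
    rintro x ⟨hx, hxc⟩ y ⟨hy, hyc⟩
    exact ⟨fun hxy => Set.disjoint_left.mp hXY hx (hxy ▸ hy),
      fun hxy => (hc x y ⟨hx, hy, hxy⟩).elim hxc hyc⟩
  have hhub : ∀ z ∈ X \ {c} ∪ Y \ {c}, Rᶜ.Adj w z := fun z hz =>
    hH.subset (Set.union_subset_union Set.sdiff_subset Set.sdiff_subset hz)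
  exact hblue (SimpleGraph.hasNWheel_of_forall_adj hblueXY hhub (by omega)
    (by have := Set.pred_ncard_le_ncard_sdiff_singleton X c; omega)
    (by have := Set.pred_ncard_le_ncard_sdiff_singleton Y c; omega))
end

section
/- Let 2 < k < j be integers and let K_N, with N ≥ 4j+1, have a red-blue edge coloring with no red copy of C_{2k+1} and no blue copy of W_{2j}. Let w be a vertex of K_N and let H be the set of blue neighbors of w, with |H| ≥ 3j. Then the red graph H^R induced on H is not bipartite. -/
variable {V : Type*} {G : SimpleGraph V}

open SimpleGraph in
theorem exists_isCycle_of_isChain {l : List V} (hnd : l.Nodup) (h3 : 3 ≤ l.length)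
    (hchain : l.IsChain G.Adj) (hclose : ∀ a ∈ l.getLast?, ∀ b ∈ l.head?, G.Adj a b) :
    ∃ (v : V) (c : G.Walk v v), c.IsCycle ∧ c.length = l.length ∧ ∀ x ∈ c.support, x ∈ l := by
  obtain ⟨m, hm⟩ : ∃ m, l.length = m + 3 := ⟨l.length - 3, by omega⟩
  let f : Fin (m + 3) → V := fun i => l[i.val]
  have hsucc : ∀ i : Fin (m + 3), G.Adj (f i) (f (i + 1)) := by
    intro i
    by_cases hi : i.val + 1 < m + 3
    · have : ((i + 1 : Fin (m + 3)) : ℕ) = i.val + 1 := by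
        rw [Fin.val_add_one_of_lt' hi]
      simp only [f, this]
      exact hchain.getElem i.val (by omega)
    · have hi' : i = Fin.last (m + 2) := Fin.ext (by simp; omega)
      subst hi'
      simp only [f, Fin.last_add_one, Fin.val_last, Fin.val_zero]
      exact hclose _ (by simp [List.getLast?_eq_getElem?, hm]) _ (by simp [List.head?_eq_getElem?])
  let φ : cycleGraph (m + 3) →g G :=
    ⟨f, fun {i i'} h => by
      rcases cycleGraph_adj.mp h with h | h
      · rw [sub_eq_iff_eq_add'] at h; subst h; exact (hsucc i').symm
      · rw [sub_eq_iff_eq_add'] at h; subst h; exact hsucc i⟩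
  have hinj : Function.Injective φ := fun i i' h =>
    Fin.ext ((List.Nodup.getElem_inj_iff hnd).mp h)
  refine ⟨φ 0, (cycleGraph.cycle m).map φ, (Walk.isCycle_map_iff_of_injective hinj).mpr
    cycleGraph.isCycle_cycle, by simp [cycleGraph.length_cycle, hm], fun x hx => ?_⟩
  obtain ⟨i, -, rfl⟩ := List.mem_map.mp ((Walk.support_map _ _) ▸ hx)
  exact List.getElem_mem _

theorem hasNCycle_of_isChain {l : List V} (hnd : l.Nodup) (h3 : 3 ≤ l.length)
    (hchain : l.IsChain G.Adj) (hclose : ∀ a ∈ l.getLast?, ∀ b ∈ l.head?, G.Adj a b) :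
    HasNCycle G l.length :=
  let ⟨v, c, hc, hlen, _⟩ := exists_isCycle_of_isChain hnd h3 hchain hclose
  ⟨v, c, hc, hlen⟩

theorem hasNWheel_of_isChain {l : List V} (hnd : l.Nodup) (h3 : 3 ≤ l.length)
    (hchain : l.IsChain G.Adj) (hclose : ∀ a ∈ l.getLast?, ∀ b ∈ l.head?, G.Adj a b)
    {w : V} (hw : ∀ x ∈ l, G.Adj w x) : HasNWheel G l.length :=
  let ⟨v, c, hc, hlen, hsupp⟩ := exists_isCycle_of_isChain hnd h3 hchain hclose
  ⟨w, v, c, hc, hlen, fun x hx => hw x (hsupp x hx)⟩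

theorem Set.exists_nodup_list_of_le_ncard {S : Set V} {m : ℕ} (hm : m ≤ S.ncard) :
    ∃ l : List V, l.Nodup ∧ l.length = m ∧ ∀ x ∈ l, x ∈ S := by
  rcases S.finite_or_infinite with hS | hS
  · rw [Set.ncard_eq_toFinset_card S hS] at hm
    obtain ⟨t, hts, rfl⟩ := Finset.exists_subset_card_eq hm
    refine ⟨t.toList, t.nodup_toList, t.length_toList, fun x hx => ?_⟩
    simpa using hts (by simpa using hx)
  · exact ⟨[], List.nodup_nil, by simp_all [hS.ncard], by simp⟩

theorem SimpleGraph.IsClique.isChain_of_nodup {S : Set V} (hS : G.IsClique S) {l : List V}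
    (hnd : l.Nodup) (hl : ∀ x ∈ l, x ∈ S) : l.IsChain G.Adj :=
  (hnd.pairwise_of_set_pairwise (hS.subset hl)).isChain

theorem SimpleGraph.IsClique.exists_chain {S : Set V} (hS : G.IsClique S) {a b : V}
    (ha : a ∈ S) (hb : b ∈ S) (hab : a ≠ b) {m : ℕ} (hm2 : 2 ≤ m) (hm : m ≤ S.ncard) :
    ∃ l : List V, l.Nodup ∧ l.length = m ∧ (∀ x ∈ l, x ∈ S) ∧ l.IsChain G.Adj ∧
      l.head? = some a ∧ l.getLast? = some b := by
  obtain ⟨l, hnd, hlen, hmem⟩ := Set.exists_nodup_list_of_le_ncard (S := S \ {a, b}) (m := m - 2)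
    (le_trans (by rw [Set.ncard_pair hab]; omega) (Set.le_ncard_sdiff {a, b} S))
  have hnd' : (a :: (l ++ [b])).Nodup := by
    simp only [List.nodup_cons, List.nodup_append, List.mem_append, List.mem_singleton]
    grind
  have hmem' : ∀ x ∈ a :: (l ++ [b]), x ∈ S := by
    simp only [List.mem_cons, List.mem_append]
    grind
  exact ⟨_, hnd', by simp; omega, hmem', hS.isChain_of_nodup hnd' hmem', rfl,
    by simp [List.getLast?_cons]⟩

theorem exists_alternating_chain {P Q : Set V} (hPQ : ∀ x ∈ P, ∀ y ∈ Q, G.Adj x y)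
    {m : ℕ} (hm1 : 1 ≤ m) (hmP : m ≤ P.ncard) (hmQ : m ≤ Q.ncard) {a b : V}
    (ha : a ∈ P) (hb : b ∈ Q) :
    ∃ l : List V, l.Nodup ∧ l.length = 2 * m ∧ (∀ x ∈ l, x ∈ P ∪ Q) ∧ l.IsChain G.Adj ∧
      l.head? = some a ∧ l.getLast? = some b := by
  obtain ⟨n, rfl⟩ : ∃ n, m = n + 1 := ⟨m - 1, by omega⟩
  clear hm1
  induction n generalizing P Q a with
  | zero =>
    refine ⟨[a, b], ?_, rfl, by simp [ha, hb], by simpa using hPQ a ha b hb, rfl, rfl⟩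
    simpa using G.ne_of_adj (hPQ a ha b hb)
  | succ n ih =>
    obtain ⟨b', hb'Q, hb'b⟩ := Set.exists_ne_of_one_lt_ncard (s := Q) (by omega) b
    obtain ⟨a', ha'P, ha'a⟩ := Set.exists_ne_of_one_lt_ncard (s := P) (by omega) a
    obtain ⟨l, hnd, hlen, hmem, hchain, hhead, hlast⟩ :=
      ih (P := P \ {a}) (Q := Q \ {b'}) (a := a') (hPQ := fun x hx y hy => hPQ x hx.1 y hy.1)
        (hmP := by simp [ha]; omega) (hmQ := by simp [hb'Q]; omega) (ha := ⟨ha'P, ha'a⟩)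
        (hb := ⟨hb, hb'b.symm⟩)
    have hPQ' : ∀ x ∈ P, x ∉ Q := fun x hx hxQ => G.irrefl (hPQ x hx x hxQ)
    refine ⟨a :: b' :: l, ?_, by simp [hlen]; ring, ?_, ?_, rfl, ?_⟩
    · have ha_l : a ∉ l := fun h =>
        hPQ' a ha ((hmem a h).resolve_left fun h' => h'.2 rfl).1
      have hb'_l : b' ∉ l := fun h =>
        hPQ' b' ((hmem b' h).resolve_right fun h' => h'.2 rfl).1 hb'Q
      simp only [List.nodup_cons, List.mem_cons, not_or]
      exact ⟨⟨fun h => hPQ' a ha (h ▸ hb'Q), ha_l⟩, hb'_l, hnd⟩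
    · simp only [List.mem_cons]
      rintro x (rfl | rfl | hx)
      exacts [Or.inl ha, Or.inr hb'Q, (hmem x hx).imp (·.1) (·.1)]
    · refine List.isChain_cons_cons.mpr ⟨hPQ a ha b' hb'Q, List.isChain_cons.mpr ⟨?_, hchain⟩⟩
      rw [hhead]
      rintro _ ⟨⟩
      exact (hPQ a' ha'P b' hb'Q).symm
    · simp [List.getLast?_cons, hlast]

theorem hasNWheel_of_isClique_of_isClique {X Y : Set V} (hX : G.IsClique X)
    (hY : G.IsClique Y) (hXY : Disjoint X Y) {x₁ x₂ y₁ y₂ : V} (hx₁ : x₁ ∈ X) (hx₂ : x₂ ∈ X)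
    (hy₁ : y₁ ∈ Y) (hy₂ : y₂ ∈ Y) (hx : x₁ ≠ x₂) (hy : y₁ ≠ y₂) (h₁ : G.Adj x₁ y₁)
    (h₂ : G.Adj x₂ y₂) {w : V} (hw : ∀ v ∈ X ∪ Y, G.Adj w v) {a b : ℕ} (ha2 : 2 ≤ a)
    (ha : a ≤ X.ncard) (hb2 : 2 ≤ b) (hb : b ≤ Y.ncard) : HasNWheel G (a + b) := by
  obtain ⟨lX, hndX, hlenX, hmemX, hchainX, hheadX, hlastX⟩ := hX.exists_chain hx₁ hx₂ hx ha2 ha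
  obtain ⟨lY, hndY, hlenY, hmemY, hchainY, hheadY, hlastY⟩ :=
    hY.exists_chain hy₂ hy₁ hy.symm hb2 hb
  have hY0 : lY ≠ [] := by rintro rfl; simp at hlenY; omega
  have hX0 : lX ≠ [] := by rintro rfl; simp at hlenX; omega
  have hnd : (lX ++ lY).Nodup := List.nodup_append.mpr
    ⟨hndX, hndY, fun x hx y hy hxy => hXY.ne_of_mem (hmemX x hx) (hmemY y hy) hxy⟩
  have hchain : (lX ++ lY).IsChain G.Adj := List.isChain_append.mpr
    ⟨hchainX, hchainY, by rw [hlastX, hheadY]; rintro _ ⟨⟩ _ ⟨⟩; exact h₂⟩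
  have hclose : ∀ a ∈ (lX ++ lY).getLast?, ∀ b ∈ (lX ++ lY).head?, G.Adj a b := by
    rw [List.getLast?_append_of_ne_nil _ hY0, List.head?_append_of_ne_nil _ hX0, hlastY, hheadX]
    rintro _ ⟨⟩ _ ⟨⟩
    exact h₁.symm
  simpa [hlenX, hlenY] using hasNWheel_of_isChain hnd (by simp; omega) hchain hclose
    (w := w) fun x hx => hw x ((List.mem_append.mp hx).imp (hmemX x) (hmemY x))

theorem hasNWheel_of_isClique_of_forall_adj {C I : Set V} (hC : G.IsClique C)
    (hCI : ∀ c ∈ C, ∀ i ∈ I, G.Adj c i) {w : V} (hw : ∀ v ∈ C ∪ I, G.Adj w v) {a b : ℕ}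
    (ha1 : 1 ≤ a) (hab : a ≤ b) (hb2 : 2 ≤ b) (ha : a ≤ I.ncard) (hb : b ≤ C.ncard) :
    HasNWheel G (a + b) := by
  classical
  -- The rim is `rest ++ alt`: `b - a` vertices of `C`, then `a` further vertices of `C`
  -- alternating with `a` vertices of `I`.
  obtain ⟨rest, hndR, hlenR, hmemR⟩ := Set.exists_nodup_list_of_le_ncard (m := b - a)
    (by omega : b - a ≤ C.ncard)
  have hC' : a ≤ (C \ ↑rest.toFinset).ncard := by
    have := Set.le_ncard_sdiff (↑rest.toFinset) C
    rw [Set.ncard_coe_finset, List.toFinset_card_of_nodup hndR] at this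
    omega
  obtain ⟨c, hc⟩ := Set.nonempty_of_ncard_ne_zero (by omega : (C \ ↑rest.toFinset).ncard ≠ 0)
  obtain ⟨i, hi⟩ := Set.nonempty_of_ncard_ne_zero (by omega : I.ncard ≠ 0)
  obtain ⟨alt, hndA, hlenA, hmemA, hchainA, hheadA, hlastA⟩ :=
    exists_alternating_chain (fun x hx y hy => hCI x hx.1 y hy) ha1 hC' ha hc hi
  have hCI' : ∀ x ∈ C, x ∉ I := fun x hx hxI => G.irrefl (hCI x hx x hxI)
  have hA0 : alt ≠ [] := by rintro rfl; simp at hlenA; omega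
  have hnd : (rest ++ alt).Nodup := List.nodup_append.mpr ⟨hndR, hndA, fun x hx y hy hxy => by
    subst hxy
    rcases hmemA x hy with h | h
    exacts [h.2 (by simpa using hx), hCI' x (hmemR x hx) h]⟩
  have hchain : (rest ++ alt).IsChain G.Adj := by
    refine List.isChain_append.mpr ⟨hC.isChain_of_nodup hndR hmemR, hchainA, ?_⟩
    rw [hheadA]
    rintro x hx _ ⟨⟩
    have hx' : x ∈ rest := List.mem_of_mem_getLast? hx
    exact hC (hmemR x hx') hc.1 fun h => hc.2 (by simpa [← h] using hx')
  have hclose : ∀ x ∈ (rest ++ alt).getLast?, ∀ y ∈ (rest ++ alt).head?, G.Adj x y := by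
    rw [List.getLast?_append_of_ne_nil _ hA0, hlastA]
    rintro _ ⟨⟩ y hy
    have hyC : y ∈ C := by
      rcases rest with _ | ⟨r, rs⟩
      · simp only [List.nil_append, hheadA, Option.mem_some_iff] at hy
        exact hy ▸ hc.1
      · simp only [List.cons_append, List.head?_cons, Option.mem_some_iff] at hy
        exact hy ▸ hmemR r List.mem_cons_self
    exact (hCI y hyC i hi).symm
  have hmem : ∀ x ∈ rest ++ alt, x ∈ C ∪ I := fun x hx => (List.mem_append.mp hx).elim
    (fun h => Or.inl (hmemR x h)) fun h => (hmemA x h).imp (·.1) id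
  have := hasNWheel_of_isChain hnd (by simp; omega) hchain hclose fun x hx => hw x (hmem x hx)
  rwa [List.length_append, hlenR, hlenA, show b - a + 2 * a = a + b by omega] at this

theorem SimpleGraph.IsClique.hasNWheel_of_forall_adj {P I : Set V} (hP : G.IsClique P)
    (hPI : ∀ x ∈ P, ∀ i ∈ I, G.Adj x i) {a b : ℕ} (ha1 : 1 ≤ a) (hab : a ≤ b) (hb2 : 2 ≤ b)
    (ha : a ≤ I.ncard) (hb : b + 1 ≤ P.ncard) : HasNWheel G (a + b) := by
  obtain ⟨p, hp⟩ := Set.nonempty_of_ncard_ne_zero (by omega : P.ncard ≠ 0)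
  refine hasNWheel_of_isClique_of_forall_adj (C := P \ {p}) (w := p) (hP.subset Set.sdiff_subset)
    (fun x hx => hPI x hx.1) ?_ ha1 hab hb2 ha (by rw [Set.ncard_sdiff_singleton_of_mem hp]; omega)
  rintro v (hv | hv)
  exacts [hP hp hv.1 fun h => hv.2 h.symm, hPI p hp v hv]

theorem ncard_lt_of_isClique_of_not_hasNWheel {n : ℕ} (hG : ¬HasNWheel G n) (hn : 3 ≤ n)
    {S : Set V} (hS : G.IsClique S) {w : V} (hw : ∀ x ∈ S, G.Adj w x) : S.ncard < n := by
  by_contra! hSn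
  obtain ⟨i, hi⟩ := Set.nonempty_of_ncard_ne_zero (by omega : S.ncard ≠ 0)
  refine hG ?_
  have := hasNWheel_of_isClique_of_forall_adj (C := S \ {i}) (I := {i}) (w := w)
    (hS.subset Set.sdiff_subset) (fun c hc i' hi' => hS hc.1 (hi' ▸ hi) (hi' ▸ hc.2))
    (fun v hv => hw v (hv.elim (·.1) (· ▸ hi))) le_rfl (by omega : 1 ≤ n - 1) (by omega)
    (by simp) (by simp [hi]; omega)
  rwa [show 1 + (n - 1) = n by omega] at this

theorem hasNWheel_of_isClique_of_isClique_of_forall_adj {U P : Set V} (hU : G.IsClique U)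
    (hP : G.IsClique P) (hUP : ∀ u ∈ U, ∀ x ∈ P, G.Adj u x) {w : V} (hw : ∀ x ∈ P, G.Adj w x)
    (hwU : w ∉ U) {j : ℕ} (hj : 3 ≤ j) (hjU : j ≤ U.ncard) (hjP : j ≤ P.ncard) :
    HasNWheel G (2 * j) := by
  obtain ⟨p, hp⟩ := Set.nonempty_of_ncard_ne_zero (by omega : P.ncard ≠ 0)
  have hwP : w ∉ P \ {p} := fun h => G.irrefl (hw w h.1)
  obtain ⟨u₁, hu₁⟩ := Set.nonempty_of_ncard_ne_zero (by omega : U.ncard ≠ 0)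
  obtain ⟨u₂, hu₂, hu⟩ := Set.exists_ne_of_one_lt_ncard (by omega : 1 < U.ncard) u₁
  obtain ⟨x₁, hx₁⟩ := Set.nonempty_of_ncard_ne_zero (by simp [hp]; omega : (P \ {p}).ncard ≠ 0)
  obtain ⟨x₂, hx₂, hx⟩ :=
    Set.exists_ne_of_one_lt_ncard (by simp [hp]; omega : 1 < (P \ {p}).ncard) x₁
  have hY : G.IsClique (insert w (P \ {p})) :=
    (G.isClique_insert).mpr ⟨hP.subset Set.sdiff_subset, fun x hx _ => hw x hx.1⟩
  have hYj : j ≤ (insert w (P \ {p})).ncard := by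
    rw [Set.ncard_insert_of_notMem hwP (Set.finite_of_ncard_pos (by simp [hp]; omega))]
    simp [hp]; omega
  have hUY : Disjoint U (insert w (P \ {p})) := by
    refine Set.disjoint_left.mpr fun u hu hu' => ?_
    rcases hu' with rfl | hu'
    exacts [hwU hu, G.irrefl (hUP u hu u hu'.1)]
  have := hasNWheel_of_isClique_of_isClique hU hY hUY hu₁ hu₂ (Or.inr hx₁) (Or.inr hx₂) hu.symm
    hx.symm (hUP u₁ hu₁ x₁ hx₁.1) (hUP u₂ hu₂ x₂ hx₂.1) (w := p) ?_ (a := j) (b := j) (by omega)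
    hjU (by omega) hYj
  · rwa [← two_mul] at this
  · rintro v (hv | rfl | hv)
    exacts [(hUP v hv p hp).symm, (hw p hp).symm, hP hp hv.1 fun h => hv.2 h.symm]

theorem exists_forall_eq_or_eq_of_forall_eq_or_eq_s16 {α : Type*} [Nonempty α] {r : α → α → Prop}
    (h : ∀ x₁ y₁ x₂ y₂, r x₁ y₁ → r x₂ y₂ → x₁ = x₂ ∨ y₁ = y₂) :
    ∃ v, ∀ x y, r x y → x = v ∨ y = v := by
  by_cases h₀ : ∃ x₀ y₀, r x₀ y₀
  · obtain ⟨x₀, y₀, h₀⟩ := h₀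
    by_cases hx : ∀ x y, r x y → x = x₀
    · exact ⟨x₀, fun x y hxy => Or.inl (hx x y hxy)⟩
    push Not at hx
    obtain ⟨x₁, y₁, h₁, hx₁⟩ := hx
    have hy₁ : y₁ = y₀ := (h x₁ y₁ x₀ y₀ h₁ h₀).resolve_left hx₁
    refine ⟨y₀, fun x y hxy => Or.inr ?_⟩
    by_contra hy
    have hx₀ : x = x₀ := (h x y x₀ y₀ hxy h₀).resolve_right hy
    exact hx₁ (hx₀ ▸ ((h x y x₁ y₁ hxy h₁).resolve_right (hy₁ ▸ hy))).symm
  · push Not at h₀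
    exact ⟨Classical.arbitrary α, fun x y hxy => (h₀ x y hxy).elim⟩

theorem exists_forall_not_adj_of_not_hasNWheel {X Y : Set V} (hX : G.IsClique X)
    (hY : G.IsClique Y) (hXY : Disjoint X Y) {w : V} (hw : ∀ v ∈ X ∪ Y, G.Adj w v) {a b : ℕ}
    (hG : ¬HasNWheel G (a + b)) (ha2 : 2 ≤ a) (ha : a ≤ X.ncard) (hb2 : 2 ≤ b)
    (hb : b ≤ Y.ncard) : ∃ v, ∀ x ∈ X \ {v}, ∀ y ∈ Y \ {v}, ¬G.Adj x y := by
  have : Nonempty V := ⟨w⟩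
  obtain ⟨v, hv⟩ := exists_forall_eq_or_eq_of_forall_eq_or_eq_s16
    (r := fun x y => x ∈ X ∧ y ∈ Y ∧ G.Adj x y)
    fun x₁ y₁ x₂ y₂ ⟨hx₁, hy₁, h₁⟩ ⟨hx₂, hy₂, h₂⟩ => by
      by_contra! hne
      exact hG (hasNWheel_of_isClique_of_isClique hX hY hXY hx₁ hx₂ hy₁ hy₂ hne.1 hne.2 h₁ h₂ hw
        ha2 ha hb2 hb)
  exact ⟨v, fun x hx y hy h => (hv x y ⟨hx.1, hy.1, h⟩).elim hx.2 hy.2⟩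

theorem hasNCycle_of_adj_of_adj {P Q : Set V} (hPQ : ∀ x ∈ P, ∀ y ∈ Q, G.Adj x y)
    {u x y : V} (hu : u ∉ P ∪ Q) (hx : x ∈ P) (hy : y ∈ Q) (hux : G.Adj u x) (huy : G.Adj u y)
    {m : ℕ} (hm1 : 1 ≤ m) (hmP : m ≤ P.ncard) (hmQ : m ≤ Q.ncard) :
    HasNCycle G (2 * m + 1) := by
  obtain ⟨l, hnd, hlen, hmem, hchain, hhead, hlast⟩ :=
    exists_alternating_chain hPQ hm1 hmP hmQ hx hy
  have hnd' : (u :: l).Nodup := List.nodup_cons.mpr ⟨fun h => hu (hmem u h), hnd⟩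
  have hchain' : (u :: l).IsChain G.Adj :=
    List.isChain_cons.mpr ⟨by rw [hhead]; rintro _ ⟨⟩; exact hux, hchain⟩
  have hclose : ∀ a ∈ (u :: l).getLast?, ∀ b ∈ (u :: l).head?, G.Adj a b := by
    simp only [List.getLast?_cons, hlast, Option.getD_some, List.head?_cons]
    rintro _ ⟨⟩ _ ⟨⟩
    exact huy.symm
  simpa [hlen] using hasNCycle_of_isChain hnd' (by simp; omega) hchain' hclose

theorem hasNCycle_of_adj_of_adj_of_adj {P Q : Set V} (hPQ : ∀ x ∈ P, ∀ y ∈ Q, G.Adj x y)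
    {u₁ u₂ y₁ y₂ : V} (hu₁ : u₁ ∉ P ∪ Q) (hu₂ : u₂ ∉ P ∪ Q) (hy₁ : y₁ ∈ Q) (hy₂ : y₂ ∈ Q)
    (hy : y₁ ≠ y₂) (hu : G.Adj u₁ u₂) (h₁ : G.Adj u₁ y₁) (h₂ : G.Adj u₂ y₂)
    {m : ℕ} (hm1 : 1 ≤ m) (hmP : m ≤ P.ncard) (hmQ : m + 1 ≤ Q.ncard) :
    HasNCycle G (2 * m + 3) := by
  obtain ⟨x, hx⟩ := Set.nonempty_of_ncard_ne_zero (by omega : P.ncard ≠ 0)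
  obtain ⟨l, hnd, hlen, hmem, hchain, hhead, hlast⟩ :=
    exists_alternating_chain (Q := Q \ {y₁}) (fun x hx y hy => hPQ x hx y hy.1) hm1 hmP
      (by simp [hy₁]; omega) hx ⟨hy₂, hy.symm⟩
  have hy₁l : y₁ ∉ l := fun h => (hmem y₁ h).elim (fun h' => G.irrefl (hPQ y₁ h' y₁ hy₁))
    fun h' => h'.2 rfl
  have hnd' : (u₂ :: u₁ :: y₁ :: l).Nodup := by
    simp only [List.nodup_cons, List.mem_cons, not_or]
    refine ⟨⟨(G.ne_of_adj hu).symm, fun h => hu₂ (Or.inr (h ▸ hy₁)),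
      fun h => hu₂ ((hmem u₂ h).imp_right (·.1))⟩, ⟨fun h => hu₁ (Or.inr (h ▸ hy₁)),
      fun h => hu₁ ((hmem u₁ h).imp_right (·.1))⟩, hy₁l, hnd⟩
  have hchain' : (u₂ :: u₁ :: y₁ :: l).IsChain G.Adj := by
    simp only [List.isChain_cons_cons]
    refine ⟨hu.symm, h₁, List.isChain_cons.mpr ⟨?_, hchain⟩⟩
    rw [hhead]
    rintro _ ⟨⟩
    exact (hPQ x hx y₁ hy₁).symm
  have hclose : ∀ a ∈ (u₂ :: u₁ :: y₁ :: l).getLast?, ∀ b ∈ (u₂ :: u₁ :: y₁ :: l).head?,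
      G.Adj a b := by
    simp only [List.getLast?_cons, hlast, Option.getD_some, List.head?_cons]
    rintro _ ⟨⟩ _ ⟨⟩
    exact h₂.symm
  simpa [hlen] using hasNCycle_of_isChain hnd' (by simp) hchain' hclose

theorem SimpleGraph.adj_of_not_compl_adj {u v : V} (huv : u ≠ v) (h : ¬Gᶜ.Adj u v) :
    G.Adj u v :=
  not_not.mp fun h' => h ⟨huv, h'⟩

theorem SimpleGraph.ncard_neighborSet_add_ncard_compl [Finite V] (v : V) :
    (G.neighborSet v).ncard + (Gᶜ.neighborSet v).ncard + 1 = Nat.card V := by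
  rw [← Set.ncard_union_eq (G.compl_neighborSet_disjoint v),
    G.neighborSet_union_compl_neighborSet_eq, ← Set.ncard_singleton v, add_comm,
    Set.ncard_add_ncard_compl]

theorem Set.ncard_union_le_ncard_sdiff_add_ncard_sdiff {s t : Set V} (a : V) :
    (s ∪ t).ncard ≤ (s \ {a}).ncard + (t \ {a}).ncard + 1 := by
  have := Set.pred_ncard_le_ncard_sdiff_singleton (s ∪ t) a
  rw [Set.union_sdiff_distrib] at this
  have := Set.ncard_union_le (s \ {a}) (t \ {a})
  omega

section Coloring

variable {R : SimpleGraph V} {k j : ℕ} {w : V}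

theorem exists_isClique_compl_of_isBipartite_induce {H : Set V}
    (h : IsBipartite (R.induce H)) : ∃ X ⊆ H, Rᶜ.IsClique X ∧ Rᶜ.IsClique (H \ X) := by
  obtain ⟨A, hA⟩ := h
  have hA' : ∀ x y (hx : x ∈ H) (hy : y ∈ H), R.Adj x y → (⟨x, hx⟩ ∈ A ↔ ⟨y, hy⟩ ∉ A) :=
    fun x y hx hy hxy => hA ⟨x, hx⟩ ⟨y, hy⟩ hxy
  refine ⟨Subtype.val '' A, Set.image_val_subset, ?_, ?_⟩
  · rintro _ ⟨x, hx, rfl⟩ _ ⟨y, hy, rfl⟩ hne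
    exact ⟨hne, fun hxy => (hA' x y x.2 y.2 hxy).mp hx hy⟩
  · rintro x ⟨hxH, hx⟩ y ⟨hyH, hy⟩ hne
    refine ⟨hne, fun hxy => hy ⟨⟨y, hyH⟩, ?_, rfl⟩⟩
    exact not_not.mp fun hy' => hx ⟨⟨x, hxH⟩, (hA' x y hxH hyH hxy).mpr hy', rfl⟩

theorem forall_compl_adj_or_forall_compl_adj (hred : ¬HasNCycle R (2 * k + 1)) {P Q : Set V}
    (hPQ : ∀ x ∈ P, ∀ y ∈ Q, R.Adj x y) (hk : 1 ≤ k) (hkP : k ≤ P.ncard) (hkQ : k ≤ Q.ncard)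
    {u : V} (hu : u ∉ P ∪ Q) : (∀ x ∈ P, Rᶜ.Adj u x) ∨ ∀ y ∈ Q, Rᶜ.Adj u y := by
  by_contra! h
  obtain ⟨⟨x, hx, hux⟩, ⟨y, hy, huy⟩⟩ := h
  exact hred <| hasNCycle_of_adj_of_adj hPQ hu hx hy
    (R.adj_of_not_compl_adj (fun h => hu (Or.inl (h ▸ hx))) hux)
    (R.adj_of_not_compl_adj (fun h => hu (Or.inr (h ▸ hy))) huy) hk hkP hkQ

theorem not_adj_of_exists_adj_of_exists_adj (hk : 2 ≤ k) (hkj : k < j)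
    (hred : ¬HasNCycle R (2 * k + 1)) (hblue : ¬HasNWheel Rᶜ (2 * j)) {P Q : Set V}
    (hQw : Q ⊆ Rᶜ.neighborSet w) (hQ : Rᶜ.IsClique Q) (hPQ : ∀ x ∈ P, ∀ y ∈ Q, R.Adj x y)
    (hkP : k ≤ P.ncard) (hQj : 2 * j - 1 ≤ Q.ncard) {u₁ u₂ : V} (hu₁ : u₁ ∉ P ∪ Q)
    (hu₂ : u₂ ∉ P ∪ Q) (hwu₁ : R.Adj w u₁) (hwu₂ : R.Adj w u₂) (h₁ : ∃ y ∈ Q, R.Adj u₁ y)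
    (h₂ : ∃ y ∈ Q, R.Adj u₂ y) : ¬R.Adj u₁ u₂ := by
  intro hu
  have hcycle : ∀ {v₁ v₂ y₁ y₂}, v₁ ∉ P ∪ Q → v₂ ∉ P ∪ Q → y₁ ∈ Q → y₂ ∈ Q → R.Adj v₁ v₂ →
      R.Adj v₁ y₁ → R.Adj v₂ y₂ → y₁ = y₂ := fun hv₁ hv₂ hy₁ hy₂ hv h₁ h₂ => by
    by_contra hy
    have := hasNCycle_of_adj_of_adj_of_adj hPQ hv₁ hv₂ hy₁ hy₂ hy hv h₁ h₂ (m := k - 1)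
      (by omega) (by omega) (by omega)
    exact hred (by rwa [show 2 * (k - 1) + 3 = 2 * k + 1 by omega] at this)
  obtain ⟨y₂, hy₂, h₂⟩ := h₂
  have honly₁ : ∀ z ∈ Q, R.Adj u₁ z → z = y₂ := fun z hz h =>
    hcycle hu₁ hu₂ hz hy₂ hu h h₂
  obtain ⟨y₁, hy₁, h₁⟩ := h₁
  have honly₂ : ∀ z ∈ Q, R.Adj u₂ z → z = y₂ := fun z hz h =>
    (hcycle hu₂ hu₁ hz hy₁ hu.symm h h₁).trans (honly₁ y₁ hy₁ h₁)
  have hblue₁ : ∀ x ∈ Q \ {y₂}, Rᶜ.Adj x u₁ := fun x hx =>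
    ⟨fun h => hu₁ (Or.inr (h ▸ hx.1)), fun h => hx.2 (honly₁ x hx.1 h.symm)⟩
  have hblue₂ : ∀ x ∈ Q \ {y₂}, Rᶜ.Adj x u₂ := fun x hx =>
    ⟨fun h => hu₂ (Or.inr (h ▸ hx.1)), fun h => hx.2 (honly₂ x hx.1 h.symm)⟩
  have hI : ({u₁, u₂, w} : Set V).ncard = 3 :=
    Set.ncard_eq_three.mpr ⟨u₁, u₂, w, R.ne_of_adj hu, (R.ne_of_adj hwu₁).symm,
      (R.ne_of_adj hwu₂).symm, rfl⟩
  have := (hQ.subset Set.sdiff_subset).hasNWheel_of_forall_adj (P := Q \ {y₂})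
    (I := {u₁, u₂, w}) ?_ (a := 3) (b := 2 * j - 3) (by omega) (by omega) (by omega) hI.ge
    (by simp [hy₂]; omega)
  · exact hblue (by rwa [show 3 + (2 * j - 3) = 2 * j by omega] at this)
  · rintro x hx i (rfl | rfl | rfl)
    exacts [hblue₁ x hx, hblue₂ x hx, (hQw hx.1).symm]

theorem exists_mem_neighborSet_forall_compl_adj (hk : 2 ≤ k) (hkj : k < j)
    (hred : ¬HasNCycle R (2 * k + 1)) (hblue : ¬HasNWheel Rᶜ (2 * j)) {P Q : Set V}
    (hPw : P ⊆ Rᶜ.neighborSet w) (hQw : Q ⊆ Rᶜ.neighborSet w) (hP : Rᶜ.IsClique P)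
    (hQ : Rᶜ.IsClique Q) (hPQ : ∀ x ∈ P, ∀ y ∈ Q, R.Adj x y) (hPj : j ≤ P.ncard)
    (hQj : 2 * j - 1 ≤ Q.ncard) (hUj : j ≤ (R.neighborSet w).ncard) :
    ∃ u ∈ R.neighborSet w, ∀ y ∈ Q, Rᶜ.Adj u y := by
  by_contra! h
  have hUPQ : ∀ u ∈ R.neighborSet w, u ∉ P ∪ Q := fun u hu hPQu =>
    (hPQu.elim (@hPw u) (@hQw u)).2 hu
  have hUQ : ∀ u ∈ R.neighborSet w, ∃ y ∈ Q, R.Adj u y := fun u hu =>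
    let ⟨y, hy, hn⟩ := h u hu
    ⟨y, hy, R.adj_of_not_compl_adj (fun h => hUPQ u hu (Or.inr (h ▸ hy))) hn⟩
  have hUP : ∀ u ∈ R.neighborSet w, ∀ x ∈ P, Rᶜ.Adj u x := fun u hu =>
    (forall_compl_adj_or_forall_compl_adj hred hPQ (by omega) (by omega) (by omega)
      (hUPQ u hu)).resolve_right fun hall => let ⟨y, hy, hn⟩ := h u hu; hn (hall y hy)
  have hU : Rᶜ.IsClique (R.neighborSet w) := fun u₁ hu₁ u₂ hu₂ hne =>
    ⟨hne, not_adj_of_exists_adj_of_exists_adj hk hkj hred hblue hQw hQ hPQ (by omega) hQj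
      (hUPQ u₁ hu₁) (hUPQ u₂ hu₂) hu₁ hu₂ (hUQ u₁ hu₁) (hUQ u₂ hu₂)⟩
  exact hblue <| hasNWheel_of_isClique_of_isClique_of_forall_adj hU hP hUP (fun x hx => hPw hx)
    (R.irrefl (v := w)) (by omega) hUj hPj

variable [Finite V]

theorem ncard_sep_forall_compl_adj_add_ncard_lt (hblue : ¬HasNWheel Rᶜ (2 * j)) {P : Set V}
    (hPw : P ⊆ Rᶜ.neighborSet w) (hP : Rᶜ.IsClique P) (hjP : j < P.ncard)
    (hP2j : P.ncard < 2 * j) :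
    {u ∈ R.neighborSet w | ∀ x ∈ P, Rᶜ.Adj u x}.ncard + P.ncard < 2 * j := by
  set W := {u ∈ R.neighborSet w | ∀ x ∈ P, Rᶜ.Adj u x}
  by_contra! hW
  have hwW : w ∉ W := fun h => R.irrefl h.1
  have := hP.hasNWheel_of_forall_adj (I := insert w W) (a := 2 * j + 1 - P.ncard)
    (b := P.ncard - 1) ?_ (by omega) (by omega) (by omega)
    (by rw [Set.ncard_insert_of_notMem hwW]; omega) (by omega)
  · exact hblue (by rwa [show 2 * j + 1 - P.ncard + (P.ncard - 1) = 2 * j by omega] at this)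
  · rintro x hx i (rfl | hi)
    exacts [(hPw hx).symm, (hi.2 x hx).symm]

theorem ncard_add_ncard_add_ncard_neighborSet_lt (hk : 2 ≤ k) (hkj : k < j)
    (hred : ¬HasNCycle R (2 * k + 1)) (hblue : ¬HasNWheel Rᶜ (2 * j)) {P Q : Set V}
    (hPw : P ⊆ Rᶜ.neighborSet w) (hQw : Q ⊆ Rᶜ.neighborSet w) (hP : Rᶜ.IsClique P)
    (hQ : Rᶜ.IsClique Q) (hPQ : ∀ x ∈ P, ∀ y ∈ Q, R.Adj x y) (hP2j : P.ncard < 2 * j)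
    (hQ2j : Q.ncard < 2 * j) (hPQj : 3 * j ≤ P.ncard + Q.ncard + 1) :
    P.ncard + Q.ncard + 1 + (R.neighborSet w).ncard < 4 * j := by
  by_contra! hU
  have hPj : j ≤ P.ncard := by omega
  have hQj : j ≤ Q.ncard := by omega
  set UP := {u ∈ R.neighborSet w | ∀ x ∈ P, Rᶜ.Adj u x}
  set UQ := {u ∈ R.neighborSet w | ∀ y ∈ Q, Rᶜ.Adj u y}
  have hUPQ : ∀ u ∈ R.neighborSet w, u ∉ P ∪ Q := fun u hu hPQu =>
    (hPQu.elim (@hPw u) (@hQw u)).2 hu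
  have hcover : (R.neighborSet w).ncard ≤ UP.ncard + UQ.ncard := by
    refine (Set.ncard_le_ncard fun u hu => ?_).trans (Set.ncard_union_le UP UQ)
    exact (forall_compl_adj_or_forall_compl_adj hred hPQ (by omega) (by omega) (by omega)
      (hUPQ u hu)).imp (⟨hu, ·⟩) (⟨hu, ·⟩)
  rcases hPj.eq_or_lt with hPj | hPj
  · obtain ⟨u, hu, hQu⟩ := exists_mem_neighborSet_forall_compl_adj hk hkj hred hblue hPw hQw hP
      hQ hPQ hPj.le (by omega) (by omega)
    have : UQ.ncard + Q.ncard < 2 * j :=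
      ncard_sep_forall_compl_adj_add_ncard_lt hblue hQw hQ (by omega) hQ2j
    have : 0 < UQ.ncard := (Set.ncard_pos).mpr ⟨u, hu, hQu⟩
    omega
  rcases hQj.eq_or_lt with hQj | hQj
  · obtain ⟨u, hu, hPu⟩ := exists_mem_neighborSet_forall_compl_adj hk hkj hred hblue hQw hPw hQ
      hP (fun y hy x hx => (hPQ x hx y hy).symm) hQj.le (by omega) (by omega)
    have : UP.ncard + P.ncard < 2 * j :=
      ncard_sep_forall_compl_adj_add_ncard_lt hblue hPw hP (by omega) hP2j
    have : 0 < UP.ncard := (Set.ncard_pos).mpr ⟨u, hu, hPu⟩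
    omega
  have : UP.ncard + P.ncard < 2 * j :=
    ncard_sep_forall_compl_adj_add_ncard_lt hblue hPw hP hPj hP2j
  have : UQ.ncard + Q.ncard < 2 * j :=
    ncard_sep_forall_compl_adj_add_ncard_lt hblue hQw hQ hQj hQ2j
  omega

end Coloring

theorem stmt16 (k j N : ℕ) (hk : 2 < k) (hkj : k < j) (hN : 4 * j + 1 ≤ N)
    (R : SimpleGraph (Fin N))
    (hred : ¬ HasNCycle R (2 * k + 1))
    (hblue : ¬ HasNWheel Rᶜ (2 * j))
    (w : Fin N) (H : Set (Fin N)) (hH : H = Rᶜ.neighborSet w)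
    (hcard : 3 * j ≤ H.ncard) :
    ¬ IsBipartite (R.induce H) := by
  intro hbip
  obtain ⟨X, hXH, hX, hY⟩ := exists_isClique_compl_of_isBipartite_induce hbip
  subst hH
  have hXj := ncard_lt_of_isClique_of_not_hasNWheel hblue (by omega) hX fun x hx => hXH hx
  have hYj := ncard_lt_of_isClique_of_not_hasNWheel hblue (by omega) hY fun x hx => hx.1
  have hXY := Set.ncard_sdiff_add_ncard_of_subset hXH
  obtain ⟨v, hv⟩ := exists_forall_not_adj_of_not_hasNWheel hX hY Set.disjoint_sdiff_right
    (w := w) (fun x hx => hx.elim (@hXH x) (·.1)) (two_mul j ▸ hblue) (by omega) (by omega)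
    (by omega) (by omega)
  have hPQ : ∀ x ∈ X \ {v}, ∀ y ∈ (Rᶜ.neighborSet w \ X) \ {v}, R.Adj x y := fun x hx y hy =>
    R.adj_of_not_compl_adj (fun h => hy.1.2 (h ▸ hx.1)) (hv x hx y hy)
  have hsplit := Set.ncard_union_le_ncard_sdiff_add_ncard_sdiff (s := X)
    (t := Rᶜ.neighborSet w \ X) v
  rw [Set.union_sdiff_cancel hXH] at hsplit
  have hPX := Set.ncard_sdiff_singleton_le X v
  have hQY := Set.ncard_sdiff_singleton_le (Rᶜ.neighborSet w \ X) v
  have hcount := ncard_add_ncard_add_ncard_neighborSet_lt (by omega) hkj hred hblue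
    (fun x hx => hXH hx.1) (fun x hx => hx.1.1) (hX.subset Set.sdiff_subset)
    (hY.subset Set.sdiff_subset) hPQ (by omega) (by omega) (by omega)
  have hdeg := R.ncard_neighborSet_add_ncard_compl w
  rw [Nat.card_eq_fintype_card, Fintype.card_fin] at hdeg
  omega
end
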